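/- arXiv:2004.13813 — 3 statements merged into one kernel-verified Lean document; each statement's English description precedes it below -/
import Mathlib

section
/- Let p be a prime and s₁, s₂ real numbers with s₁ > 2 and s₂ > 2. Set X = p^{−s₁} and Y = p^{−s₂}. Then (1 − p⁻¹)⁻² times the integral over {(x,y,z) ∈ ℤ_p³ : ‖y‖ < ‖z‖ ≤ ‖x‖} of ‖x‖^{s₂−2}·‖z‖^{s₁−1} with respect to μ³ equals p⁻¹ / ((1 − XY)(1 − p⁻¹X)). -/
/-!
Integrate out `y` first: `{y | ‖y‖ < ‖z‖}` is the ideal `p ^ (v(z) + 1) ℤ_p`, of index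
`p ^ (v(z) + 1)`, so its Haar measure is `‖z‖ / p`. What remains is an iterated integral of
powers of norms over balls, and `∫_{‖z‖ ≤ ‖x‖} ‖z‖ ^ s dμ = (1 - p⁻¹) / (1 - p^{-(s+1)}) ‖x‖ ^ (s+1)`
follows by summing over the spheres `‖z‖ = p⁻ᶜ ‖x‖`, each of measure `(1 - p⁻¹) p⁻ᶜ ‖x‖`,
a geometric series. Applying it twice gives the two factors of the denominator.
-/

open MeasureTheory

namespace PadicInt

variable {p : ℕ} [Fact p.Prime]

theorem setOf_norm_lt_pow (n : ℕ) :
    {x : ℤ_[p] | ‖x‖ < (p : ℝ) ^ (-n : ℤ)} = {x | ‖x‖ ≤ (p : ℝ) ^ (-(n + 1 : ℕ) : ℤ)} := by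
  ext x
  simp only [Set.mem_ofPred_eq, norm_lt_pow_iff_norm_le_pow_sub_one]
  push_cast
  ring_nf

theorem norm_eq_inv_pow_valuation {x : ℤ_[p]} (hx : x ≠ 0) :
    ‖x‖ = (p : ℝ)⁻¹ ^ x.valuation := by
  rw [norm_eq_zpow_neg_valuation hx, zpow_neg, zpow_natCast, inv_pow]

theorem norm_p_pow_mul (c : ℕ) (x : ℤ_[p]) : ‖(p : ℤ_[p]) ^ c * x‖ = (p : ℝ)⁻¹ ^ c * ‖x‖ := by
  rw [norm_mul, norm_pow, norm_p]

theorem exists_norm_eq_norm_p_pow_mul {x z : ℤ_[p]} (hz : z ≠ 0) (hzx : ‖z‖ ≤ ‖x‖) :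
    ∃ c : ℕ, ‖z‖ = ‖(p : ℤ_[p]) ^ c * x‖ := by
  have hx : x ≠ 0 := norm_pos_iff.mp ((norm_pos_iff.mpr hz).trans_le hzx)
  have hq : (0 : ℝ) < (p : ℝ)⁻¹ := inv_pos.mpr (by exact_mod_cast (Fact.out : p.Prime).pos)
  have hq1 : (p : ℝ)⁻¹ < 1 := inv_lt_one_of_one_lt₀ (by exact_mod_cast (Fact.out : p.Prime).one_lt)
  rw [norm_eq_inv_pow_valuation hz, norm_eq_inv_pow_valuation hx,
    pow_le_pow_iff_right_of_lt_one₀ hq hq1] at hzx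
  refine ⟨z.valuation - x.valuation, ?_⟩
  rw [norm_p_pow_mul, norm_eq_inv_pow_valuation hz, norm_eq_inv_pow_valuation hx, ← pow_add,
    Nat.sub_add_cancel hzx]

variable [MeasurableSpace ℤ_[p]] [BorelSpace ℤ_[p]]
  (μ : Measure ℤ_[p]) [μ.IsAddHaarMeasure] [IsProbabilityMeasure μ]

theorem measureReal_norm_le_pow (n : ℕ) :
    μ.real {x : ℤ_[p] | ‖x‖ ≤ (p : ℝ) ^ (-n : ℤ)} = (p : ℝ) ^ (-n : ℤ) := by
  set H := (RingHom.ker (toZModPow n : ℤ_[p] →+* ZMod (p ^ n))).toAddSubgroup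
  have hH : {x : ℤ_[p] | ‖x‖ ≤ (p : ℝ) ^ (-n : ℤ)} = H := by
    ext x
    rw [Set.mem_ofPred_eq, SetLike.mem_coe, Submodule.mem_toAddSubgroup, ker_toZModPow,
      norm_le_pow_iff_mem_span_pow]
  have hindex : H.index = p ^ n := by
    rw [show H = (toZModPow n : ℤ_[p] →+* ZMod (p ^ n)).toAddMonoidHom.ker from rfl,
      AddSubgroup.index_ker, AddMonoidHom.range_eq_top.mpr (ZMod.ringHom_surjective _)]
    simp
  have : H.FiniteIndex := ⟨by rw [hindex]; exact pow_ne_zero _ (Fact.out : p.Prime).ne_zero⟩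
  have hmeas : MeasurableSet (H : Set ℤ_[p]) :=
    hH ▸ (isClosed_le continuous_norm continuous_const).measurableSet
  have key := H.index_mul_measure hmeas μ
  rw [measure_univ, hindex] at key
  rw [hH, measureReal_def, ENNReal.eq_inv_of_mul_eq_one_left (a := μ H) (by rwa [mul_comm])]
  simp [ENNReal.toReal_inv]

theorem measureReal_norm_le_norm {z : ℤ_[p]} (hz : z ≠ 0) : μ.real {y | ‖y‖ ≤ ‖z‖} = ‖z‖ := by
  rw [norm_eq_zpow_neg_valuation hz]
  exact measureReal_norm_le_pow μ _

theorem measureReal_norm_lt_norm (z : ℤ_[p]) : μ.real {y | ‖y‖ < ‖z‖} = (p : ℝ)⁻¹ * ‖z‖ := by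
  rcases eq_or_ne z 0 with rfl | hz
  · simp [(norm_nonneg _).not_gt]
  rw [norm_eq_zpow_neg_valuation hz, setOf_norm_lt_pow, measureReal_norm_le_pow]
  have hp : (p : ℝ) ≠ 0 := by exact_mod_cast (Fact.out : p.Prime).ne_zero
  rw [← zpow_neg_one, ← zpow_add₀ hp]
  push_cast
  ring_nf

theorem measureReal_norm_eq_norm {z : ℤ_[p]} (hz : z ≠ 0) :
    μ.real {y | ‖y‖ = ‖z‖} = (1 - (p : ℝ)⁻¹) * ‖z‖ := by
  have hsphere : {y : ℤ_[p] | ‖y‖ = ‖z‖} = {y | ‖y‖ ≤ ‖z‖} \ {y | ‖y‖ < ‖z‖} := by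
    ext y
    simp only [Set.mem_ofPred_eq, Set.mem_sdiff, not_lt, le_antisymm_iff]
  rw [hsphere, measureReal_sdiff
    (Set.ofPred_subset_ofPred.mpr fun _ => le_of_lt)
    (isOpen_lt continuous_norm continuous_const).measurableSet,
    measureReal_norm_le_norm μ hz, measureReal_norm_lt_norm]
  ring

theorem setIntegral_norm_rpow_norm_eq_norm (s : ℝ) {a : ℤ_[p]} (ha : a ≠ 0) :
    ∫ z in {z | ‖z‖ = ‖a‖}, ‖z‖ ^ s ∂μ = (1 - (p : ℝ)⁻¹) * ‖a‖ ^ (s + 1) := by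
  rw [setIntegral_congr_fun (isClosed_eq continuous_norm continuous_const).measurableSet
      fun z (hz : ‖z‖ = ‖a‖) => by rw [hz],
    setIntegral_const, measureReal_norm_eq_norm μ ha, smul_eq_mul,
    Real.rpow_add_one (norm_ne_zero_iff.mpr ha)]
  ring

theorem setIntegral_norm_rpow_norm_le_norm {s : ℝ} (hs : 0 < s) (x : ℤ_[p]) :
    ∫ z in {z | ‖z‖ ≤ ‖x‖}, ‖z‖ ^ s ∂μ =
      (1 - (p : ℝ)⁻¹) / (1 - (p : ℝ)⁻¹ ^ (s + 1)) * ‖x‖ ^ (s + 1) := by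
  have hs1 : s + 1 ≠ 0 := by linarith
  rcases eq_or_ne x 0 with rfl | hx
  · rw [norm_zero, Real.zero_rpow hs1, mul_zero]
    refine setIntegral_eq_zero_of_forall_eq_zero fun z hz => ?_
    rw [norm_le_zero_iff.mp hz, norm_zero, Real.zero_rpow hs.ne']
  have hq : (0 : ℝ) < (p : ℝ)⁻¹ := inv_pos.mpr (by exact_mod_cast (Fact.out : p.Prime).pos)
  have hq1 : (p : ℝ)⁻¹ < 1 := inv_lt_one_of_one_lt₀ (by exact_mod_cast (Fact.out : p.Prime).one_lt)
  set S : ℕ → Set ℤ_[p] := fun c => {z | ‖z‖ = ‖(p : ℤ_[p]) ^ c * x‖}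
  have hS : ∀ c, MeasurableSet (S c) := fun c =>
    (isClosed_eq continuous_norm continuous_const).measurableSet
  have hdisj : Pairwise (Function.onFun Disjoint S) := by
    refine fun c d hcd => Set.disjoint_left.mpr fun z (hzc : ‖z‖ = _) (hzd : ‖z‖ = _) => hcd ?_
    rw [hzc, norm_p_pow_mul, norm_p_pow_mul, mul_left_inj' (norm_ne_zero_iff.mpr hx)] at hzd
    exact pow_right_injective₀ hq hq1.ne hzd
  -- The ball is the union of the spheres `S c`, up to the point `0`, where `‖z‖ ^ s` vanishes.
  have hball : ∫ z in {z | ‖z‖ ≤ ‖x‖}, ‖z‖ ^ s ∂μ = ∫ z in ⋃ c, S c, ‖z‖ ^ s ∂μ := by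
    refine setIntegral_eq_of_subset_of_forall_sdiff_eq_zero
      (isClosed_le continuous_norm continuous_const).measurableSet ?_ fun z ⟨hzx, hzS⟩ => ?_
    · rintro z ⟨_, ⟨c, rfl⟩, hzc : ‖z‖ = _⟩
      rw [Set.mem_ofPred_eq, hzc, norm_p_pow_mul]
      exact mul_le_of_le_one_left (norm_nonneg x) (pow_le_one₀ hq.le hq1.le)
    · rcases eq_or_ne z 0 with rfl | hz
      · rw [norm_zero, Real.zero_rpow hs.ne']
      · exact absurd (Set.mem_iUnion.mpr (exists_norm_eq_norm_p_pow_mul hz hzx)) hzS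
  have hsphere : ∀ c, ∫ z in S c, ‖z‖ ^ s ∂μ =
      (1 - (p : ℝ)⁻¹) * ‖x‖ ^ (s + 1) * ((p : ℝ)⁻¹ ^ (s + 1)) ^ c := by
    intro c
    have hpc : (p : ℤ_[p]) ^ c * x ≠ 0 :=
      mul_ne_zero (pow_ne_zero _ (by exact_mod_cast (Fact.out : p.Prime).ne_zero)) hx
    rw [setIntegral_norm_rpow_norm_eq_norm μ s hpc, norm_p_pow_mul,
      Real.mul_rpow (by positivity) (norm_nonneg x), ← Real.rpow_pow_comm hq.le]
    ring
  rw [hball, integral_iUnion hS hdisj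
    ((continuous_norm.rpow_const fun _ => Or.inr hs.le).integrable_of_hasCompactSupport
      (.of_compactSpace _)).integrableOn, tsum_congr hsphere, tsum_mul_left,
    tsum_geometric_of_lt_one (by positivity) (Real.rpow_lt_one hq.le hq1 (by linarith))]
  ring

theorem integral_norm_rpow {s : ℝ} (hs : 0 < s) :
    ∫ x : ℤ_[p], ‖x‖ ^ s ∂μ = (1 - (p : ℝ)⁻¹) / (1 - (p : ℝ)⁻¹ ^ (s + 1)) := by
  have h := setIntegral_norm_rpow_norm_le_norm μ hs 1
  have huniv : {z : ℤ_[p] | ‖z‖ ≤ ‖(1 : ℤ_[p])‖} = Set.univ :=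
    Set.eq_univ_of_forall fun z => (norm_le_one z).trans_eq norm_one.symm
  rwa [huniv, Measure.restrict_univ, norm_one, Real.one_rpow, mul_one] at h

theorem setIntegral_norm_lt_norm_le_norm (F : ℤ_[p] → ℤ_[p] → ℝ)
    (hF : Continuous (Function.uncurry F)) :
    ∫ w in {w : ℤ_[p] × ℤ_[p] × ℤ_[p] | ‖w.2.1‖ < ‖w.2.2‖ ∧ ‖w.2.2‖ ≤ ‖w.1‖},
        F w.1 w.2.2 ∂(μ.prod (μ.prod μ)) =
      (p : ℝ)⁻¹ * ∫ x, ∫ z in {z | ‖z‖ ≤ ‖x‖}, ‖z‖ * F x z ∂μ ∂μ := by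
  set R := {w : ℤ_[p] × ℤ_[p] × ℤ_[p] | ‖w.2.1‖ < ‖w.2.2‖ ∧ ‖w.2.2‖ ≤ ‖w.1‖}
  have hR : MeasurableSet R := by
    simp only [R, Set.ofPred_and]
    exact (measurableSet_lt (by fun_prop) (by fun_prop)).inter
      (measurableSet_le (by fun_prop) (by fun_prop))
  set G := R.indicator fun w => F w.1 w.2.2
  have hFc : Continuous fun w : ℤ_[p] × ℤ_[p] × ℤ_[p] => F w.1 w.2.2 :=
    hF.comp (continuous_fst.prodMk (continuous_snd.comp continuous_snd))
  have hG : Integrable G (μ.prod (μ.prod μ)) :=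
    (hFc.integrable_of_hasCompactSupport (.of_compactSpace _)).indicator hR
  have hslice : ∀ x y z, G (x, y, z) =
      {y : ℤ_[p] | ‖y‖ < ‖z‖}.indicator (fun _ => {z | ‖z‖ ≤ ‖x‖}.indicator (F x) z) y := by
    intro x y z
    by_cases hy : ‖y‖ < ‖z‖ <;> by_cases hz : ‖z‖ ≤ ‖x‖ <;> simp [G, R, hy, hz]
  rw [← integral_indicator hR, integral_prod _ hG, ← integral_const_mul]
  refine integral_congr_ae ((hG.prod_right_ae).mono fun x hx => ?_)
  dsimp only
  rw [integral_prod_symm _ hx, ← integral_indicator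
    (isClosed_le continuous_norm continuous_const).measurableSet, ← integral_const_mul]
  congr 1
  funext z
  simp only [hslice]
  rw [integral_indicator_const _ (isOpen_lt continuous_norm continuous_const).measurableSet,
    measureReal_norm_lt_norm, smul_eq_mul, Set.indicator_mul_right, mul_assoc]

end PadicInt

theorem stmt5 (p : ℕ) [Fact p.Prime]
    [MeasurableSpace ℤ_[p]] [BorelSpace ℤ_[p]]
    (μ : Measure ℤ_[p]) [μ.IsAddHaarMeasure] (hμ : μ Set.univ = 1)
    (s₁ s₂ : ℝ) (hs₁ : 2 < s₁) (hs₂ : 2 < s₂)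
    (X Y : ℝ) (hX : X = (p : ℝ) ^ (-s₁)) (hY : Y = (p : ℝ) ^ (-s₂)) :
    ((1 - (p : ℝ)⁻¹) ^ 2)⁻¹ *
      ∫ w in {w : ℤ_[p] × ℤ_[p] × ℤ_[p] | ‖w.2.1‖ < ‖w.2.2‖ ∧ ‖w.2.2‖ ≤ ‖w.1‖},
        ‖w.1‖ ^ (s₂ - 2) * ‖w.2.2‖ ^ (s₁ - 1) ∂(μ.prod (μ.prod μ)) =
      (p : ℝ)⁻¹ / ((1 - X * Y) * (1 - (p : ℝ)⁻¹ * X)) := by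
  have : IsProbabilityMeasure μ := ⟨hμ⟩
  have hp : (1 : ℝ) < p := by exact_mod_cast (Fact.out : p.Prime).one_lt
  have hq : 0 < (p : ℝ)⁻¹ := inv_pos.mpr (by linarith)
  have hinner (x : ℤ_[p]) :
      ∫ z in {z | ‖z‖ ≤ ‖x‖}, ‖z‖ * (‖x‖ ^ (s₂ - 2) * ‖z‖ ^ (s₁ - 1)) ∂μ =
        (1 - (p : ℝ)⁻¹) / (1 - (p : ℝ)⁻¹ ^ (s₁ + 1)) * ‖x‖ ^ (s₁ + s₂ - 1) := by
    have hz (z : ℤ_[p]) : ‖z‖ * (‖x‖ ^ (s₂ - 2) * ‖z‖ ^ (s₁ - 1)) = ‖x‖ ^ (s₂ - 2) * ‖z‖ ^ s₁ := by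
      rw [mul_left_comm, mul_comm ‖z‖, ← Real.rpow_add_one' (norm_nonneg z) (by linarith),
        sub_add_cancel]
    simp_rw [hz]
    rw [integral_const_mul, PadicInt.setIntegral_norm_rpow_norm_le_norm μ (by linarith),
      mul_left_comm, ← Real.rpow_add' (norm_nonneg x) (by linarith)]
    ring_nf
  rw [PadicInt.setIntegral_norm_lt_norm_le_norm μ (fun x z => ‖x‖ ^ (s₂ - 2) * ‖z‖ ^ (s₁ - 1))
    (by fun_prop (disch := linarith))]
  simp_rw [hinner]
  rw [integral_const_mul, PadicInt.integral_norm_rpow μ (by linarith), sub_add_cancel, hX, hY,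
    Real.rpow_neg_eq_inv_rpow, Real.rpow_neg_eq_inv_rpow, ← Real.rpow_add hq,
    mul_comm _ (_ ^ s₁), ← Real.rpow_add_one hq.ne']
  have hq1 : (p : ℝ)⁻¹ < 1 := inv_lt_one_of_one_lt₀ hp
  have h0 : 1 - (p : ℝ)⁻¹ ≠ 0 := by linarith
  have h1 := (sub_pos.mpr (Real.rpow_lt_one hq.le hq1 (by linarith : 0 < s₁ + s₂))).ne'
  have h2 := (sub_pos.mpr (Real.rpow_lt_one hq.le hq1 (by linarith : 0 < s₁ + 1))).ne'
  generalize (p : ℝ)⁻¹ = q at h0 h1 h2 ⊢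
  field_simp
end

section
/- Let p be a prime and s₁, s₂ real numbers with s₁ > 2 and s₂ > 2. Set X = p^{−s₁} and Y = p^{−s₂}. Then (1 − p⁻¹)⁻² times the integral over {(x,y,z) ∈ ℤ_p³ : ‖z‖² ≤ ‖x‖ < ‖y‖ ≤ ‖z‖} of ‖x‖^{s₁−2}·‖z‖^{s₂−1} with respect to μ³ equals (p − 1)·X²Y / ((1 − XY)(1 − X²Y)(1 − pX²Y)). -/
/-!
Split `ℤ_[p]³` according to the valuations `(a, b, c)` of `(x, y, z)`. The region becomes the
disjoint union of the products of spheres with `c ≤ b < a ≤ 2c`, on each of which the integrand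
is constant. The ball of radius `p⁻ⁿ` is the kernel of `ℤ_[p] → ℤ/pⁿ`, a subgroup of index `pⁿ`, so
the sphere of radius `p⁻ⁿ` has measure `(1 - p⁻¹) p⁻ⁿ`. After reparametrizing the admissible
triples by `ℕ³`, the sum factors into three geometric series with ratios `pX²Y`, `X²Y` and `XY`.
-/

open MeasureTheory Metric Function

theorem hasSum_mul_of_nonneg {ι κ : Type*} {f : ι → ℝ} {g : κ → ℝ} {s t : ℝ} (hf : HasSum f s)
    (hg : HasSum g t) (hf₀ : 0 ≤ f) (hg₀ : 0 ≤ g) :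
    HasSum (fun x : ι × κ => f x.1 * g x.2) (s * t) :=
  hf.mul hg (hf.summable.mul_of_nonneg hg.summable hf₀ hg₀)

theorem hasSum_geometric_prod_three {u v w : ℝ} (hu₀ : 0 ≤ u) (hu₁ : u < 1) (hv₀ : 0 ≤ v)
    (hv₁ : v < 1) (hw₀ : 0 ≤ w) (hw₁ : w < 1) :
    HasSum (fun n : ℕ × ℕ × ℕ => u ^ n.1 * (v ^ n.2.1 * w ^ n.2.2))
      ((1 - u)⁻¹ * ((1 - v)⁻¹ * (1 - w)⁻¹)) :=
  hasSum_mul_of_nonneg (hasSum_geometric_of_lt_one hu₀ hu₁)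
    (hasSum_mul_of_nonneg (hasSum_geometric_of_lt_one hv₀ hv₁) (hasSum_geometric_of_lt_one hw₀ hw₁)
      (fun _ => pow_nonneg hv₀ _) (fun _ => pow_nonneg hw₀ _))
    (fun _ => pow_nonneg hu₀ _) (fun _ => mul_nonneg (pow_nonneg hv₀ _) (pow_nonneg hw₀ _))

theorem zpow_neg_natCast_rpow {q : ℝ} (hq : 0 ≤ q) (n : ℕ) (s : ℝ) :
    (q ^ (-(n : ℤ))) ^ s = (q ^ (-s)) ^ n := by
  rw [← Real.rpow_intCast_mul hq, ← Real.rpow_mul_natCast hq]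
  push_cast
  ring_nf

theorem rpow_neg_ratios_lt_one {q s₁ s₂ X Y : ℝ} (hq : 1 < q) (hs₁ : 1 < s₁) (hs₂ : 0 < s₂)
    (hX : X = q ^ (-s₁)) (hY : Y = q ^ (-s₂)) :
    X * Y < 1 ∧ X ^ 2 * Y < 1 ∧ q * X ^ 2 * Y < 1 := by
  have hq₀ : 0 < q := zero_lt_one.trans hq
  have hX₀ : 0 ≤ X := hX ▸ (Real.rpow_pos_of_pos hq₀ _).le
  have hX₁ : X < 1 := hX ▸ Real.rpow_lt_one_of_one_lt_of_neg hq (by linarith)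
  have hY₁ : Y < 1 := hY ▸ Real.rpow_lt_one_of_one_lt_of_neg hq (by linarith)
  have hqX : q * X < 1 := by
    rw [hX, ← Real.rpow_one_add' hq₀.le (by linarith)]
    exact Real.rpow_lt_one_of_one_lt_of_neg hq (by linarith)
  have hXY : X * Y < 1 := mul_lt_one_of_nonneg_of_lt_one_left hX₀ hX₁ hY₁.le
  refine ⟨hXY, ?_, ?_⟩
  · rw [sq, mul_assoc]
    exact mul_lt_one_of_nonneg_of_lt_one_left hX₀ hX₁ hXY.le
  · rw [sq, ← mul_assoc, mul_assoc]
    exact mul_lt_one_of_nonneg_of_lt_one_left (by positivity) hqX hXY.le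

/-- `(i, j, k) ↦ (a, b, c)` is a bijection onto `c ≤ b < a ≤ 2c`, with inverse
`i = a - b - 1`, `j = b - c`, `k = 2c - a`. -/
def cellValuations (n : ℕ × ℕ × ℕ) : ℕ × ℕ × ℕ :=
  (2 * n.1 + 2 * n.2.1 + n.2.2 + 2, n.1 + 2 * n.2.1 + n.2.2 + 1, n.1 + n.2.1 + n.2.2 + 1)

theorem cellValuations_injective : Injective cellValuations := by
  rintro ⟨i, j, k⟩ ⟨i', j', k'⟩ h
  simp only [cellValuations, Prod.mk.injEq] at h
  simp only [Prod.mk.injEq]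
  omega

theorem exists_cellValuations_eq_iff {a b c : ℕ} :
    (∃ n, cellValuations n = (a, b, c)) ↔ c ≤ b ∧ b < a ∧ a ≤ 2 * c := by
  constructor
  · rintro ⟨⟨i, j, k⟩, h⟩
    simp only [cellValuations, Prod.mk.injEq] at h
    omega
  · rintro ⟨hcb, hba, hac⟩
    refine ⟨(a - b - 1, b - c, 2 * c - a), ?_⟩
    simp only [cellValuations, Prod.mk.injEq]
    omega

theorem cellValuations_summand_eq {q s₁ s₂ X Y : ℝ} (hq : 0 < q) (hX : X = q ^ (-s₁))
    (hY : Y = q ^ (-s₂)) (n : ℕ × ℕ × ℕ) :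
    (1 - q⁻¹) * q⁻¹ ^ (cellValuations n).1 * ((1 - q⁻¹) * q⁻¹ ^ (cellValuations n).2.1 *
        ((1 - q⁻¹) * q⁻¹ ^ (cellValuations n).2.2)) *
      ((q ^ (-((cellValuations n).1 : ℤ))) ^ (s₁ - 2) *
        (q ^ (-((cellValuations n).2.2 : ℤ))) ^ (s₂ - 1)) =
    (1 - q⁻¹) ^ 3 * (q * X ^ 2 * Y) *
      ((q * X ^ 2 * Y) ^ n.1 * ((X ^ 2 * Y) ^ n.2.1 * (X * Y) ^ n.2.2)) := by
  obtain ⟨i, j, k⟩ := n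
  have hX' : q ^ (-(s₁ - 2)) = X * q ^ 2 := by
    rw [hX, neg_sub, sub_eq_add_neg, Real.rpow_add hq, Real.rpow_two, mul_comm]
  have hY' : q ^ (-(s₂ - 1)) = Y * q := by
    rw [hY, neg_sub, sub_eq_add_neg, Real.rpow_add hq, Real.rpow_one, mul_comm]
  rw [zpow_neg_natCast_rpow hq.le, zpow_neg_natCast_rpow hq.le, hX', hY']
  simp only [cellValuations]
  calc _ = (1 - q⁻¹) ^ 3 * (q⁻¹ * q) ^ (4 * i + 5 * j + 3 * k + 4) * (q * X ^ 2 * Y) *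
        ((q * X ^ 2 * Y) ^ i * ((X ^ 2 * Y) ^ j * (X * Y) ^ k)) := by ring
    _ = _ := by rw [inv_mul_cancel₀ hq.ne', one_pow, mul_one]

theorem zpow_neg_region_iff {q : ℝ} (hq : 1 < q) (a b c : ℕ) :
    ((q ^ (-(c : ℤ))) ^ 2 ≤ q ^ (-(a : ℤ)) ∧ q ^ (-(a : ℤ)) < q ^ (-(b : ℤ)) ∧
      q ^ (-(b : ℤ)) ≤ q ^ (-(c : ℤ))) ↔ c ≤ b ∧ b < a ∧ a ≤ 2 * c := by
  rw [← zpow_natCast, ← zpow_mul, zpow_le_zpow_iff_right₀ hq, zpow_lt_zpow_iff_right₀ hq,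
    zpow_le_zpow_iff_right₀ hq]
  omega

namespace PadicInt

variable {p : ℕ} [Fact p.Prime]

theorem closedBall_zero_eq_ker_toZModPow (n : ℕ) :
    closedBall (0 : ℤ_[p]) ((p : ℝ) ^ (-(n : ℤ))) =
      ((toZModPow n : ℤ_[p] →+* ZMod (p ^ n)).toAddMonoidHom.ker : Set ℤ_[p]) := by
  ext x
  simp only [mem_closedBall_zero_iff, norm_le_pow_iff_mem_span_pow, ← ker_toZModPow]
  rfl

theorem index_ker_toZModPow (n : ℕ) :
    (toZModPow n : ℤ_[p] →+* ZMod (p ^ n)).toAddMonoidHom.ker.index = p ^ n := by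
  rw [AddSubgroup.index_ker, AddMonoidHom.range_eq_top.mpr (ZMod.ringHom_surjective _),
    AddSubgroup.card_top, Nat.card_zmod]

variable (p) in
def valuationBox (v : ℕ × ℕ × ℕ) : Set (ℤ_[p] × ℤ_[p] × ℤ_[p]) :=
  sphere 0 ((p : ℝ) ^ (-(v.1 : ℤ))) ×ˢ sphere 0 ((p : ℝ) ^ (-(v.2.1 : ℤ))) ×ˢ
    sphere 0 ((p : ℝ) ^ (-(v.2.2 : ℤ)))

theorem mem_valuationBox_self {x : ℤ_[p] × ℤ_[p] × ℤ_[p]} (h₁ : x.1 ≠ 0) (h₂ : x.2.1 ≠ 0)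
    (h₃ : x.2.2 ≠ 0) : x ∈ valuationBox p (x.1.valuation, x.2.1.valuation, x.2.2.valuation) := by
  simp only [valuationBox, Set.mem_prod, mem_sphere_zero_iff_norm]
  exact ⟨norm_eq_zpow_neg_valuation h₁, norm_eq_zpow_neg_valuation h₂,
    norm_eq_zpow_neg_valuation h₃⟩

theorem pairwise_disjoint_valuationBox : Pairwise (Disjoint on valuationBox p) := by
  have hinj : Injective fun n : ℕ => (p : ℝ) ^ (-(n : ℤ)) := fun m n h => by
    simpa using (zpow_right_injective₀ (by exact_mod_cast (Fact.out : p.Prime).pos)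
      (by exact_mod_cast (Fact.out : p.Prime).one_lt.ne')) h
  intro v w hvw
  rw [Function.onFun, Set.disjoint_left]
  rintro x ⟨hx₁, hx₂, hx₃⟩ ⟨hy₁, hy₂, hy₃⟩
  rw [mem_sphere_zero_iff_norm] at hx₁ hx₂ hx₃ hy₁ hy₂ hy₃
  exact hvw (Prod.ext (hinj (hx₁.symm.trans hy₁))
    (Prod.ext (hinj (hx₂.symm.trans hy₂)) (hinj (hx₃.symm.trans hy₃))))

theorem region_eq_iUnion_valuationBox :
    {w : ℤ_[p] × ℤ_[p] × ℤ_[p] | ‖w.2.2‖ ^ 2 ≤ ‖w.1‖ ∧ ‖w.1‖ < ‖w.2.1‖ ∧ ‖w.2.1‖ ≤ ‖w.2.2‖} =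
      ⋃ n, valuationBox p (cellValuations n) := by
  have hp : (1 : ℝ) < p := by exact_mod_cast (Fact.out : p.Prime).one_lt
  ext w
  simp only [Set.mem_ofPred_eq, Set.mem_iUnion]
  constructor
  · rintro ⟨hzx, hxy, hyz⟩
    have hy : w.2.1 ≠ 0 := norm_pos_iff.mp ((norm_nonneg _).trans_lt hxy)
    have hz : w.2.2 ≠ 0 := norm_pos_iff.mp ((norm_pos_iff.mpr hy).trans_le hyz)
    have hx : w.1 ≠ 0 := norm_pos_iff.mp ((pow_pos (norm_pos_iff.mpr hz) 2).trans_le hzx)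
    have hw := mem_valuationBox_self hx hy hz
    simp only [norm_eq_zpow_neg_valuation hx, norm_eq_zpow_neg_valuation hy,
      norm_eq_zpow_neg_valuation hz] at hzx hxy hyz
    obtain ⟨n, hn⟩ :=
      exists_cellValuations_eq_iff.mpr ((zpow_neg_region_iff hp _ _ _).mp ⟨hzx, hxy, hyz⟩)
    exact ⟨n, hn ▸ hw⟩
  · rintro ⟨n, hw₁, hw₂, hw₃⟩
    rw [mem_sphere_zero_iff_norm] at hw₁ hw₂ hw₃
    rw [hw₁, hw₂, hw₃, zpow_neg_region_iff hp, ← exists_cellValuations_eq_iff]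
    exact ⟨n, rfl⟩

variable [MeasurableSpace ℤ_[p]] [BorelSpace ℤ_[p]]

theorem measurableSet_valuationBox (v : ℕ × ℕ × ℕ) : MeasurableSet (valuationBox p v) :=
  isClosed_sphere.measurableSet.prod
    (isClosed_sphere.measurableSet.prod isClosed_sphere.measurableSet)

variable (μ : Measure ℤ_[p]) [IsProbabilityMeasure μ] [μ.IsAddLeftInvariant]

theorem measureReal_closedBall_zpow (n : ℕ) :
    μ.real (closedBall 0 ((p : ℝ) ^ (-(n : ℤ)))) = (p : ℝ)⁻¹ ^ n := by
  have hmeas := (isClosed_closedBall (x := (0 : ℤ_[p])) (ε := (p : ℝ) ^ (-(n : ℤ)))).measurableSet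
  rw [closedBall_zero_eq_ker_toZModPow] at hmeas ⊢
  have h := AddSubgroup.index_mul_measure _ hmeas μ
  rw [index_ker_toZModPow, measure_univ, Nat.cast_pow] at h
  rw [measureReal_def, ENNReal.eq_inv_of_mul_eq_one_left ((mul_comm _ _).trans h),
    ENNReal.toReal_inv, ENNReal.toReal_pow, ENNReal.toReal_natCast, inv_pow]

theorem measureReal_sphere_zpow (n : ℕ) :
    μ.real (sphere 0 ((p : ℝ) ^ (-(n : ℤ)))) = (1 - (p : ℝ)⁻¹) * (p : ℝ)⁻¹ ^ n := by
  have hball : ball (0 : ℤ_[p]) ((p : ℝ) ^ (-(n : ℤ))) =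
      closedBall 0 ((p : ℝ) ^ (-((n + 1 : ℕ) : ℤ))) := by
    ext x
    simp only [mem_ball_zero_iff, mem_closedBall_zero_iff, norm_lt_pow_iff_norm_le_pow_sub_one]
    congr! 2
    push_cast; ring
  rw [← closedBall_sdiff_ball, measureReal_sdiff ball_subset_closedBall measurableSet_ball, hball,
    measureReal_closedBall_zpow, measureReal_closedBall_zpow]
  ring

theorem setIntegral_valuationBox (g : ℝ → ℝ → ℝ → ℝ) (v : ℕ × ℕ × ℕ) :
    ∫ w in valuationBox p v, g ‖w.1‖ ‖w.2.1‖ ‖w.2.2‖ ∂μ.prod (μ.prod μ) =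
      (1 - (p : ℝ)⁻¹) * (p : ℝ)⁻¹ ^ v.1 * ((1 - (p : ℝ)⁻¹) * (p : ℝ)⁻¹ ^ v.2.1 *
        ((1 - (p : ℝ)⁻¹) * (p : ℝ)⁻¹ ^ v.2.2)) *
      g ((p : ℝ) ^ (-(v.1 : ℤ))) ((p : ℝ) ^ (-(v.2.1 : ℤ))) ((p : ℝ) ^ (-(v.2.2 : ℤ))) := by
  rw [setIntegral_congr_fun (measurableSet_valuationBox v) (g := fun _ => _), setIntegral_const,
    valuationBox, measureReal_prod_prod, measureReal_prod_prod, measureReal_sphere_zpow,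
    measureReal_sphere_zpow, measureReal_sphere_zpow, smul_eq_mul]
  rintro w ⟨hw₁, hw₂, hw₃⟩
  rw [mem_sphere_zero_iff_norm] at hw₁ hw₂ hw₃
  simp only [hw₁, hw₂, hw₃]

theorem setIntegral_rpow_norm_region {s₁ s₂ : ℝ} (hs₁ : 2 ≤ s₁) (hs₂ : 1 ≤ s₂) {X Y : ℝ}
    (hX : X = (p : ℝ) ^ (-s₁)) (hY : Y = (p : ℝ) ^ (-s₂)) :
    ∫ w in {w : ℤ_[p] × ℤ_[p] × ℤ_[p] | ‖w.2.2‖ ^ 2 ≤ ‖w.1‖ ∧ ‖w.1‖ < ‖w.2.1‖ ∧ ‖w.2.1‖ ≤ ‖w.2.2‖},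
      ‖w.1‖ ^ (s₁ - 2) * ‖w.2.2‖ ^ (s₂ - 1) ∂μ.prod (μ.prod μ) =
      (1 - (p : ℝ)⁻¹) ^ 3 * ((p : ℝ) * X ^ 2 * Y) *
        ((1 - (p : ℝ) * X ^ 2 * Y)⁻¹ * ((1 - X ^ 2 * Y)⁻¹ * (1 - X * Y)⁻¹)) := by
  have hp : (1 : ℝ) < p := by exact_mod_cast (Fact.out : p.Prime).one_lt
  have hp₀ : (0 : ℝ) ≤ p := zero_le_one.trans hp.le
  have hX₀ : 0 ≤ X := hX ▸ Real.rpow_nonneg hp₀ _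
  have hY₀ : 0 ≤ Y := hY ▸ Real.rpow_nonneg hp₀ _
  obtain ⟨hXY, hX2Y, hpX2Y⟩ := rpow_neg_ratios_lt_one hp (by linarith) (by linarith) hX hY
  have hcont :
      Continuous fun w : ℤ_[p] × ℤ_[p] × ℤ_[p] => ‖w.1‖ ^ (s₁ - 2) * ‖w.2.2‖ ^ (s₂ - 1) :=
    ((continuous_norm.comp continuous_fst).rpow_const fun _ => Or.inr (by linarith)).mul
      ((continuous_norm.comp (continuous_snd.comp continuous_snd)).rpow_const
        fun _ => Or.inr (by linarith))
  rw [region_eq_iUnion_valuationBox]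
  refine (hasSum_integral_iUnion (fun n => measurableSet_valuationBox _)
    (pairwise_disjoint_valuationBox.comp_of_injective cellValuations_injective)
    (hcont.integrable_of_hasCompactSupport (.of_compactSpace _)).integrableOn).unique ?_
  refine ((hasSum_geometric_prod_three (by positivity) hpX2Y (by positivity) hX2Y
    (by positivity) hXY).mul_left ((1 - (p : ℝ)⁻¹) ^ 3 * ((p : ℝ) * X ^ 2 * Y))).congr_fun ?_
  rintro ⟨i, j, k⟩
  rw [setIntegral_valuationBox μ (fun x _ z => x ^ (s₁ - 2) * z ^ (s₂ - 1))]
  exact cellValuations_summand_eq (by positivity) hX hY (i, j, k)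

end PadicInt

theorem stmt8 (p : ℕ) [Fact p.Prime]
    [MeasurableSpace ℤ_[p]] [BorelSpace ℤ_[p]]
    (μ : Measure ℤ_[p]) [μ.IsAddHaarMeasure] (hμ : μ Set.univ = 1)
    (s₁ s₂ : ℝ) (hs₁ : 2 < s₁) (hs₂ : 2 < s₂)
    (X Y : ℝ) (hX : X = (p : ℝ) ^ (-s₁)) (hY : Y = (p : ℝ) ^ (-s₂)) :
    ((1 - (p : ℝ)⁻¹) ^ 2)⁻¹ *
      ∫ w in {w : ℤ_[p] × ℤ_[p] × ℤ_[p] | ‖w.2.2‖ ^ 2 ≤ ‖w.1‖ ∧ ‖w.1‖ < ‖w.2.1‖ ∧ ‖w.2.1‖ ≤ ‖w.2.2‖},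
        ‖w.1‖ ^ (s₁ - 2) * ‖w.2.2‖ ^ (s₂ - 1) ∂(μ.prod (μ.prod μ)) =
      ((p : ℝ) - 1) * X ^ 2 * Y / ((1 - X * Y) * (1 - X ^ 2 * Y) * (1 - (p : ℝ) * X ^ 2 * Y)) := by
  have : IsProbabilityMeasure μ := ⟨hμ⟩
  have hp : (1 : ℝ) < p := by exact_mod_cast (Fact.out : p.Prime).one_lt
  obtain ⟨hXY, hX2Y, hpX2Y⟩ := rpow_neg_ratios_lt_one hp (by linarith) (by linarith) hX hY
  rw [PadicInt.setIntegral_rpow_norm_region μ hs₁.le (by linarith) hX hY]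
  have h₁ : 1 - X * Y ≠ 0 := sub_ne_zero.mpr hXY.ne'
  have h₂ : 1 - X ^ 2 * Y ≠ 0 := sub_ne_zero.mpr hX2Y.ne'
  have h₃ : 1 - (p : ℝ) * X ^ 2 * Y ≠ 0 := sub_ne_zero.mpr hpX2Y.ne'
  field_simp
end

section
/- Let p be a prime and, for each integer e ≥ 0, let a^{cyc}_{p^e} denote the number of cocyclic (unital) subrings of R = ℤ[t]/(t³) of additive index p^e. Then in the formal power series ring ℤ⟦X⟧ one has (∑_{e ≥ 0} a^{cyc}_{p^e} X^e) · (1 − p²X³) = 1 + X + pX². -/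
/-!
A cocyclic subring `S` of index `n` is the kernel of a surjection `q : R →+ ℤ/n` with `q 1 = 0`.
Squaring the element `q(t²)·t - q(t)·t²` of `S` gives `q(t²)³ = 0`; surjectivity of `q` then makes
`q(t)` a unit, and normalising `q(t) = 1` identifies `S` with `{x₀ + x₁t + x₂t² : x₁ + βx₂ = 0 in ℤ/n}`
for a unique `β ∈ ℤ/n` with `β³ = 0`. For `n = p^e` these `β` are the multiples of `p^⌈e/3⌉`, so
`a_{p^e} = p^(e - ⌈e/3⌉)`, whence `a_{p^(e+3)} = p² a_{p^e}` with initial values `1, 1, p`.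
-/

open Polynomial

/-- `R = ℤ[t]/(t³)`. -/
abbrev R3 : Type := ℤ[X] ⧸ Ideal.span ({X ^ 3} : Set ℤ[X])

/-- The number of cocyclic unital subrings of `ℤ[t]/(t³)` of additive index `n`,
i.e. those whose additive quotient group is cyclic. -/
noncomputable def numCocyclicSubrings (n : ℕ) : ℕ :=
  Nat.card {S : Subring R3 //
    S.toAddSubgroup.index = n ∧ IsAddCyclic (R3 ⧸ S.toAddSubgroup)}

namespace R3

noncomputable def t : R3 := AdjoinRoot.root (X ^ 3 : ℤ[X])

theorem t_pow_three : t ^ 3 = 0 := by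
  have : t ^ 3 = AdjoinRoot.mk (X ^ 3 : ℤ[X]) (X ^ 3) := by
    rw [t, map_pow, AdjoinRoot.mk_X]
    rfl
  rwa [AdjoinRoot.mk_self] at this

noncomputable def powerBasis : PowerBasis ℤ R3 := AdjoinRoot.powerBasis' (monic_X_pow 3)

theorem powerBasis_dim : powerBasis.dim = 3 := natDegree_X_pow 3

noncomputable def basis : Module.Basis (Fin 3) ℤ R3 :=
  powerBasis.basis.reindex (finCongr powerBasis_dim)

theorem basis_apply (i : Fin 3) : basis i = t ^ (i : ℕ) := by
  rw [basis, Module.Basis.reindex_apply, PowerBasis.basis_eq_pow]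
  rfl

noncomputable def coord (i : Fin 3) : R3 →ₗ[ℤ] ℤ := basis.coord i

noncomputable def mk (A B C : ℤ) : R3 := A + B * t + C * t ^ 2

theorem mk_eq_sum_basis (A B C : ℤ) : mk A B C = ∑ i, ![A, B, C] i • basis i := by
  simp [mk, Fin.sum_univ_three, basis_apply, zsmul_eq_mul]

@[simp]
theorem coord_mk (A B C : ℤ) (i : Fin 3) : coord i (mk A B C) = ![A, B, C] i := by
  rw [mk_eq_sum_basis, coord, Module.Basis.coord_apply, Module.Basis.repr_sum_self]

theorem mk_coord (x : R3) : mk (coord 0 x) (coord 1 x) (coord 2 x) = x := by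
  conv_rhs => rw [← basis.sum_repr x]
  simp [mk_eq_sum_basis, Fin.sum_univ_three, coord]

theorem one_eq_mk : (1 : R3) = mk 1 0 0 := by simp [mk]

theorem mk_mul_mk (A B C A' B' C' : ℤ) :
    mk A B C * mk A' B' C' = mk (A * A') (A * B' + B * A') (A * C' + B * B' + C * A') := by
  simp only [mk]
  push_cast
  linear_combination ((B : R3) * C' + C * B' + C * C' * t) * t_pow_three

theorem coord_one_mul (x y : R3) :
    coord 1 (x * y) = coord 0 x * coord 1 y + coord 1 x * coord 0 y := by
  rw [← mk_coord x, ← mk_coord y, mk_mul_mk]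
  simp

theorem coord_two_mul (x y : R3) :
    coord 2 (x * y) = coord 0 x * coord 2 y + coord 1 x * coord 1 y + coord 2 x * coord 0 y := by
  rw [← mk_coord x, ← mk_coord y, mk_mul_mk]
  simp

theorem addMonoidHom_apply_of_map_one_eq_zero {M : Type*} [AddCommGroup M] (q : R3 →+ M) (hq : q 1 = 0) (x : R3) :
    q x = coord 1 x • q t + coord 2 x • q (t ^ 2) := by
  conv_lhs => rw [← mk_coord x]
  simp only [mk, ← zsmul_eq_mul, map_add, map_zsmul]
  rw [← zsmul_one, map_zsmul, hq, smul_zero, zero_add]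

noncomputable def coordForm {n : ℕ} (β : ZMod n) : R3 →+ ZMod n where
  toFun x := coord 1 x + β * coord 2 x
  map_zero' := by simp
  map_add' x y := by push_cast [map_add]; ring

theorem coordForm_apply {n : ℕ} (β : ZMod n) (x : R3) :
    coordForm β x = coord 1 x + β * coord 2 x := rfl

theorem coordForm_surjective {n : ℕ} (β : ZMod n) : Function.Surjective (coordForm β) := by
  intro z
  refine ⟨mk 0 z.cast 0, ?_⟩
  simp [coordForm_apply]

noncomputable def cocyclicSubring {n : ℕ} (β : ZMod n) (hβ : β ^ 3 = 0) : Subring R3 where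
  toAddSubgroup := (coordForm β).ker
  one_mem' := by simp [coordForm_apply, one_eq_mk]
  mul_mem' {x y} hx hy := by
    simp only [AddSubmonoid.mem_carrier, AddSubgroup.mem_toAddSubmonoid, AddMonoidHom.mem_ker,
      coordForm_apply, coord_one_mul, coord_two_mul] at hx hy ⊢
    push_cast
    linear_combination (coord 0 x : ZMod n) * hy + (coord 0 y : ZMod n) * hx +
      β * (coord 1 x : ZMod n) * hy - β ^ 2 * (coord 2 y : ZMod n) * hx +
      (coord 2 x : ZMod n) * (coord 2 y : ZMod n) * hβ

theorem cocyclicSubring_toAddSubgroup {n : ℕ} (β : ZMod n) (hβ : β ^ 3 = 0) :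
    (cocyclicSubring β hβ).toAddSubgroup = (coordForm β).ker := rfl

theorem index_cocyclicSubring {n : ℕ} (β : ZMod n) (hβ : β ^ 3 = 0) :
    (cocyclicSubring β hβ).toAddSubgroup.index = n := by
  rw [cocyclicSubring_toAddSubgroup, AddSubgroup.index_ker,
    AddMonoidHom.range_eq_top_of_surjective _ (coordForm_surjective β),
    Nat.card_congr AddSubgroup.topEquiv.toEquiv, Nat.card_zmod]

theorem isAddCyclic_quotient_cocyclicSubring {n : ℕ} (β : ZMod n) (hβ : β ^ 3 = 0) :
    IsAddCyclic (R3 ⧸ (cocyclicSubring β hβ).toAddSubgroup) :=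
  let e := QuotientAddGroup.quotientKerEquivOfSurjective _ (coordForm_surjective β)
  isAddCyclic_of_surjective e.symm e.symm.surjective

theorem cocyclicSubring_injective {n : ℕ} {β β' : ZMod n} {hβ : β ^ 3 = 0} {hβ' : β' ^ 3 = 0}
    (h : cocyclicSubring β hβ = cocyclicSubring β' hβ') : β = β' := by
  have hmem : mk 0 (-β.cast) 1 ∈ cocyclicSubring β hβ := by
    change coordForm β _ = 0
    simp [coordForm_apply]
  rw [h] at hmem
  change coordForm β' _ = 0 at hmem
  simpa [coordForm_apply, neg_add_eq_zero, eq_comm] using hmem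

theorem exists_ker_eq_ker_coordForm {n : ℕ} (S : Subring R3) (q : R3 →+ ZMod n)
    (hq : Function.Surjective q) (hS : q.ker = S.toAddSubgroup) :
    ∃ β : ZMod n, β ^ 3 = 0 ∧ q.ker = (coordForm β).ker := by
  have hmem (x : R3) : x ∈ S ↔ q x = 0 := by
    rw [← Subring.mem_toAddSubgroup, ← hS, AddMonoidHom.mem_ker]
  set a := q t
  set b := q (t ^ 2)
  have hq' (x : R3) : q x = coord 1 x * a + coord 2 x * b := by
    rw [addMonoidHom_apply_of_map_one_eq_zero q ((hmem 1).1 S.one_mem), zsmul_eq_mul, zsmul_eq_mul]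
  have hb : b ^ 3 = 0 := by
    set x := mk 0 b.cast (-a.cast)
    have hx : x ∈ S := by
      rw [hmem, hq']
      simp only [x, coord_mk]
      push_cast [ZMod.intCast_zmod_cast]
      ring
    have hxx := (hmem _).1 (S.mul_mem hx hx)
    rw [mk_mul_mk, hq'] at hxx
    simpa [pow_succ] using hxx
  have ha : IsUnit a := by
    obtain ⟨z, hz⟩ := hq 1
    rw [hq', ← eq_sub_iff_add_eq] at hz
    have hnil : IsNilpotent (coord 2 z * b : ZMod n) := ⟨3, by rw [mul_pow, hb, mul_zero]⟩
    exact isUnit_of_mul_isUnit_right (hz ▸ hnil.isUnit_one_sub)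
  obtain ⟨u, hu⟩ := ha
  refine ⟨((u⁻¹ : (ZMod n)ˣ) : ZMod n) * b, by rw [mul_pow, hb, mul_zero], ?_⟩
  ext x
  have hfactor : q x = u * coordForm (((u⁻¹ : (ZMod n)ˣ) : ZMod n) * b) x := by
    rw [hq', coordForm_apply, mul_add, ← mul_assoc, ← mul_assoc, Units.mul_inv, hu]
    ring
  rw [AddMonoidHom.mem_ker, AddMonoidHom.mem_ker, hfactor, Units.mul_right_eq_zero]

theorem exists_eq_cocyclicSubring (S : Subring R3) (hS : IsAddCyclic (R3 ⧸ S.toAddSubgroup)) :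
    ∃ (β : ZMod S.toAddSubgroup.index) (hβ : β ^ 3 = 0), S = cocyclicSubring β hβ := by
  let ψ : R3 ⧸ S.toAddSubgroup ≃+ ZMod S.toAddSubgroup.index := (zmodAddCyclicAddEquiv hS).symm
  let q := ψ.toAddMonoidHom.comp (QuotientAddGroup.mk' S.toAddSubgroup)
  have hker : q.ker = S.toAddSubgroup := by
    ext x
    simp [q]
  obtain ⟨β, hβ, hβker⟩ := exists_ker_eq_ker_coordForm S q
    (ψ.surjective.comp (QuotientAddGroup.mk'_surjective _)) hker
  exact ⟨β, hβ, Subring.toAddSubgroup_injective (hker.symm.trans hβker)⟩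

end R3

open R3 in
theorem numCocyclicSubrings_eq_card (n : ℕ) :
    numCocyclicSubrings n = Nat.card {β : ZMod n // β ^ 3 = 0} := by
  refine (Nat.card_eq_of_bijective (fun β => ⟨cocyclicSubring β.1 β.2,
    index_cocyclicSubring β.1 β.2, isAddCyclic_quotient_cocyclicSubring β.1 β.2⟩) ⟨?_, ?_⟩).symm
  · intro β β' h
    exact Subtype.ext (cocyclicSubring_injective (hβ := β.2) (hβ' := β'.2) (congrArg Subtype.val h))
  · rintro ⟨S, rfl, hS⟩
    obtain ⟨β, hβ, hSβ⟩ := exists_eq_cocyclicSubring S hS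
    exact ⟨⟨β, hβ⟩, Subtype.ext hSβ.symm⟩

theorem Nat.Prime.pow_dvd_of_pow_dvd_pow {p e k x : ℕ} (hp : p.Prime) (hk : 0 < k)
    (h : p ^ e ∣ x ^ k) : p ^ ((e + k - 1) / k) ∣ x := by
  rcases eq_or_ne x 0 with rfl | hx
  · exact dvd_zero _
  rw [hp.pow_dvd_iff_le_factorization (pow_ne_zero _ hx), Nat.factorization_pow,
    Finsupp.smul_apply, smul_eq_mul] at h
  rw [hp.pow_dvd_iff_le_factorization hx, Nat.div_le_iff_le_mul_add_pred hk]
  omega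

theorem ZMod.pow_eq_zero_iff_mem_zmultiples {p : ℕ} (hp : p.Prime) {e k : ℕ} (hk : 0 < k)
    (b : ZMod (p ^ e)) :
    b ^ k = 0 ↔ b ∈ AddSubgroup.zmultiples ((p ^ ((e + k - 1) / k) : ℕ) : ZMod (p ^ e)) := by
  have : NeZero (p ^ e) := ⟨pow_ne_zero e hp.ne_zero⟩
  rw [AddSubgroup.mem_zmultiples_iff]
  constructor
  · intro hb
    have hval : ((b.val ^ k : ℕ) : ZMod (p ^ e)) = 0 := by
      push_cast [ZMod.natCast_val, ZMod.cast_id]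
      exact hb
    obtain ⟨m, hm⟩ := hp.pow_dvd_of_pow_dvd_pow hk ((ZMod.natCast_eq_zero_iff _ _).1 hval)
    refine ⟨m, ?_⟩
    rw [zsmul_eq_mul, mul_comm, Int.cast_natCast, ← Nat.cast_mul, ← hm, ZMod.natCast_val,
      ZMod.cast_id]
  · rintro ⟨m, rfl⟩
    have hek : e ≤ (e + k - 1) / k * k := by
      have := Nat.div_add_mod (e + k - 1) k
      have := Nat.mod_lt (e + k - 1) hk
      rw [mul_comm]
      omega
    rw [zsmul_eq_mul, mul_pow, ← Nat.cast_pow, ← pow_mul,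
      (ZMod.natCast_eq_zero_iff _ _).2 (pow_dvd_pow p hek), mul_zero]

theorem ZMod.card_pow_eq_zero {p : ℕ} (hp : p.Prime) (e k : ℕ) (hk : 0 < k) :
    Nat.card {b : ZMod (p ^ e) // b ^ k = 0} = p ^ (e - (e + k - 1) / k) := by
  have hle : (e + k - 1) / k ≤ e := by
    rw [Nat.div_le_iff_le_mul_add_pred hk]
    have := Nat.le_mul_of_pos_left e hk
    omega
  rw [Nat.card_congr (Equiv.subtypeEquivRight (ZMod.pow_eq_zero_iff_mem_zmultiples hp hk)),
    Nat.card_zmultiples, ZMod.addOrderOf_coe _ (pow_ne_zero e hp.ne_zero),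
    Nat.gcd_eq_right (pow_dvd_pow p hle), Nat.pow_div hle hp.pos]

theorem PowerSeries.mk_mul_one_sub_C_mul_X_pow {R : Type*} [CommRing R] (f : ℕ → R) (c : R)
    (k : ℕ) (hf : ∀ e, f (e + k) = c * f e) :
    mk f * (1 - C c * PowerSeries.X ^ k) = (trunc k (mk f) : PowerSeries R) := by
  ext n
  rw [Polynomial.coeff_coe, coeff_trunc, mul_sub, mul_one, mul_left_comm, ← mul_assoc,
    map_sub, coeff_mul_X_pow', PowerSeries.coeff_C_mul, coeff_mk]
  split_ifs with hkn hnk hnk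
  · omega
  · rw [coeff_mk, ← hf, Nat.sub_add_cancel hkn, sub_self]
  · rw [sub_zero]
  · omega

theorem stmt16 (p : ℕ) (hp : p.Prime) :
    (PowerSeries.mk fun e : ℕ => (numCocyclicSubrings (p ^ e) : ℤ)) *
      (1 - (p : PowerSeries ℤ) ^ 2 * PowerSeries.X ^ 3) =
    1 + PowerSeries.X + (p : PowerSeries ℤ) * PowerSeries.X ^ 2 := by
  have hcount (e : ℕ) : (numCocyclicSubrings (p ^ e) : ℤ) = (p : ℤ) ^ (e - (e + 2) / 3) := by
    rw [numCocyclicSubrings_eq_card, ZMod.card_pow_eq_zero hp e 3 (by norm_num)]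
    push_cast
    rfl
  have hrec (e : ℕ) : (numCocyclicSubrings (p ^ (e + 3)) : ℤ) =
      (p : ℤ) ^ 2 * numCocyclicSubrings (p ^ e) := by
    rw [hcount, hcount, ← pow_add]
    congr 1
    omega
  rw [show (p : PowerSeries ℤ) ^ 2 = PowerSeries.C ((p : ℤ) ^ 2) by simp,
    PowerSeries.mk_mul_one_sub_C_mul_X_pow _ _ 3 hrec]
  simp [PowerSeries.trunc_succ, hcount, PowerSeries.monomial_eq_C_mul_X_pow]
end
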